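/- arXiv:2103.07469 — 6 statements merged into one kernel-verified Lean document; each statement's English description precedes it below -/
import Mathlib

section
/- Let V be a finite-dimensional real normed vector space and K ⊆ V a nonempty compact convex set. Let φ be a linear functional on the real vector space of affine maps V → ℝ such that φ(f) ≥ 0 for every affine f : V → ℝ with f(x) ≥ 0 for all x ∈ K, and φ(1) = 1 where 1 denotes the constant affine function with value 1. Then there exists x ∈ K such that φ(f) = f(x) for every affine map f : V → ℝ. (Every positive normalized functional on the affine functions over K is evaluation at a point of K.) -/
/-!
By reflexivity of `V`, the restriction of `φ` to the linear functionals is evaluation at a unique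
point `x`; since every affine map is a linear functional plus a constant and `φ 1 = 1`, `φ` is
evaluation at `x` on all affine maps. If `x` were outside `K`, Hahn–Banach would separate it from
the closed convex set `K` by an affine map that is nonnegative on `K` and negative at `x`,
contradicting the positivity of `φ`.
-/

open Module

theorem AffineMap.exists_eq_eval_of_linearMap_of_map_const_one
    {R V : Type*} [CommRing R] [AddCommGroup V] [Module R V] [IsReflexive R V]
    (φ : (V →ᵃ[R] R) →ₗ[R] R) (hone : φ (AffineMap.const R V 1) = 1) :
    ∃ x : V, ∀ f : V →ᵃ[R] R, φ f = f x := by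
  let ψ : Dual R (Dual R V) :=
    φ ∘ₗ (toConstProdLinearMap R).symm.toLinearMap ∘ₗ LinearMap.inr R R (Dual R V)
  set x := (evalEquiv R V).symm ψ
  refine ⟨x, fun f => ?_⟩
  have hsplit : f = (toConstProdLinearMap R).symm (f 0, 0) +
      (toConstProdLinearMap R).symm (0, f.linear) := by
    rw [← map_add, Prod.mk_add_mk, add_zero, zero_add]
    exact ((toConstProdLinearMap R).symm_apply_apply f).symm
  have hconst : (toConstProdLinearMap R).symm ((f 0, 0) : R × Dual R V) =
      f 0 • AffineMap.const R V 1 := by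
    ext; simp
  have hlin : φ ((toConstProdLinearMap R).symm (0, f.linear)) = f.linear x :=
    (apply_evalEquiv_symm_apply R V f.linear ψ).symm
  calc φ f = f.linear x + f 0 := by
        conv_lhs => rw [hsplit, map_add, hconst, map_smul, hone, hlin, smul_eq_mul, mul_one]
        exact add_comm _ _
    _ = f x := (congrFun f.decomp x).symm

theorem mem_of_forall_affineMap_nonneg
    {E : Type*} [TopologicalSpace E] [AddCommGroup E] [Module ℝ E] [IsTopologicalAddGroup E]
    [ContinuousSMul ℝ E] [LocallyConvexSpace ℝ E] {s : Set E} (hconv : Convex ℝ s)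
    (hclosed : IsClosed s) {x : E} (hx : ∀ f : E →ᵃ[ℝ] ℝ, (∀ y ∈ s, 0 ≤ f y) → 0 ≤ f x) :
    x ∈ s := by
  by_contra hxs
  obtain ⟨ℓ, u, hs, hux⟩ := geometric_hahn_banach_closed_point hconv hclosed hxs
  have := hx (AffineMap.const ℝ E u - (ℓ : E →ₗ[ℝ] ℝ).toAffineMap) fun y hy => by
    simpa using (hs y hy).le
  simp only [AffineMap.coe_sub, AffineMap.coe_const, LinearMap.coe_toAffineMap, Pi.sub_apply,
    Function.const_apply, ContinuousLinearMap.coe_coe, sub_nonneg] at this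
  linarith

theorem positive_normalized_functional_is_evaluation_general
    {V : Type*} [NormedAddCommGroup V] [NormedSpace ℝ V] [FiniteDimensional ℝ V]
    (K : Set V) (hcomp : IsCompact K) (hconv : Convex ℝ K)
    (φ : (V →ᵃ[ℝ] ℝ) →ₗ[ℝ] ℝ)
    (hpos : ∀ f : V →ᵃ[ℝ] ℝ, (∀ x ∈ K, 0 ≤ f x) → 0 ≤ φ f)
    (hone : φ (AffineMap.const ℝ V (1 : ℝ)) = 1) :
    ∃ x ∈ K, ∀ f : V →ᵃ[ℝ] ℝ, φ f = f x := by
  obtain ⟨x, hx⟩ := AffineMap.exists_eq_eval_of_linearMap_of_map_const_one φ hone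
  refine ⟨x, mem_of_forall_affineMap_nonneg hconv hcomp.isClosed fun f hf => ?_, hx⟩
  exact hx f ▸ hpos f hf

/-- every positive normalized linear functional on the space of affine
functions over a nonempty compact convex set `K` is evaluation at a point of `K`. -/
theorem positive_normalized_functional_is_evaluation
    {V : Type*} [NormedAddCommGroup V] [NormedSpace ℝ V] [FiniteDimensional ℝ V]
    (K : Set V) (hne : K.Nonempty) (hcomp : IsCompact K) (hconv : Convex ℝ K)
    (φ : (V →ᵃ[ℝ] ℝ) →ₗ[ℝ] ℝ)
    (hpos : ∀ f : V →ᵃ[ℝ] ℝ, (∀ x ∈ K, 0 ≤ f x) → 0 ≤ φ f)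
    (hone : φ (AffineMap.const ℝ V (1 : ℝ)) = 1) :
    ∃ x ∈ K, ∀ f : V →ᵃ[ℝ] ℝ, φ f = f x :=
  positive_normalized_functional_is_evaluation_general K hcomp hconv φ hpos hone
end

section
/- Let V be a finite-dimensional real normed vector space and K ⊆ V a nonempty compact convex set whose affine span equals V. Then for every linear functional ψ on the real vector space of affine maps V → ℝ there exist x, y ∈ K and scalars λ, μ ≥ 0 such that ψ(f) = λ · f(x) − μ · f(y) for every affine map f : V → ℝ. -/
/-!
An affine map vanishing on `K` vanishes on its affine span, so the evaluations at points of `K`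
span the (finite-dimensional) dual of the space of affine maps. Hence `ψ` is a difference of two
nonnegative combinations of evaluations, and by convexity a nonnegative combination
`∑ cᵢ • ev xᵢ` collapses to the single term `(∑ cᵢ) • ev (∑ (cᵢ / ∑ cⱼ) • xᵢ)`.
-/

open Submodule

section SpanOfCone

variable {𝕜 E : Type*} [Ring 𝕜] [LinearOrder 𝕜] [IsOrderedRing 𝕜] [AddCommGroup E] [Module 𝕜 E]

theorem PointedCone.mem_span_iff_exists_hull_sub {s : Set E} {v : E} :
    v ∈ span 𝕜 s ↔ ∃ a ∈ hull 𝕜 s, ∃ b ∈ hull 𝕜 s, a - b = v := by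
  constructor
  · intro hv
    induction hv using Submodule.span_induction with
    | mem x hx => exact ⟨x, subset_hull hx, 0, zero_mem _, sub_zero x⟩
    | zero => exact ⟨0, zero_mem _, 0, zero_mem _, sub_zero 0⟩
    | add v w _ _ hv hw =>
      obtain ⟨a, ha, b, hb, rfl⟩ := hv
      obtain ⟨c, hc, d, hd, rfl⟩ := hw
      exact ⟨a + c, add_mem ha hc, b + d, add_mem hb hd, by abel⟩
    | smul c v _ hv =>
      obtain ⟨a, ha, b, hb, rfl⟩ := hv
      rcases le_total 0 c with hc | hc
      · exact ⟨c • a, smul_mem _ hc ha, c • b, smul_mem _ hc hb, (smul_sub c a b).symm⟩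
      · refine ⟨(-c) • b, smul_mem _ (neg_nonneg.2 hc) hb,
          (-c) • a, smul_mem _ (neg_nonneg.2 hc) ha, ?_⟩
        simp only [neg_smul, smul_sub]
        abel
  · rintro ⟨a, ha, b, hb, rfl⟩
    exact sub_mem (hull_le_span 𝕜 s ha) (hull_le_span 𝕜 s hb)

end SpanOfCone

namespace AffineMap

section CommRing

variable (k : Type*) {V P : Type*} [CommRing k] [AddCommGroup V] [Module k V] [AddTorsor V P]

def evalₗ (p : P) : (P →ᵃ[k] k) →ₗ[k] k where
  toFun f := f p
  map_add' _ _ := rfl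
  map_smul' _ _ := rfl

@[simp]
theorem evalₗ_apply (p : P) (f : P →ᵃ[k] k) : evalₗ k p f = f p := rfl

end CommRing

theorem span_evalₗ_eq_top {k V P : Type*} [Field k] [AddCommGroup V] [Module k V]
    [FiniteDimensional k V] [AddTorsor V P] {s : Set P} (hs : affineSpan k s = ⊤) :
    span k (evalₗ k '' s) = ⊤ := by
  refine span_eq_top_of_ne_zero fun f hf => ?_
  by_contra! h
  exact hf (AffineMap.ext_on hs fun x hx => by simpa using h _ ⟨x, hx, rfl⟩)

end AffineMap

open AffineMap

section Convex

variable {𝕜 E : Type*} [Field 𝕜] [LinearOrder 𝕜] [IsStrictOrderedRing 𝕜] [AddCommGroup E]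
  [Module 𝕜 E] {K : Set E}

theorem Convex.exists_mem_add_smul_evalₗ_eq (hK : Convex 𝕜 K) {x y : E} (hx : x ∈ K)
    (hy : y ∈ K) {p q : 𝕜} (hp : 0 ≤ p) (hq : 0 ≤ q) :
    ∃ z ∈ K, (p + q) • evalₗ 𝕜 z = p • evalₗ 𝕜 x + q • evalₗ 𝕜 y := by
  rcases (add_nonneg hp hq).eq_or_lt' with hpq | hpq
  · obtain ⟨rfl, rfl⟩ := (add_eq_zero_iff_of_nonneg hp hq).1 hpq
    exact ⟨x, hx, by simp⟩
  refine ⟨_, convex_iff_div.1 hK hx hy hp hq hpq, LinearMap.ext fun f => ?_⟩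
  simp only [LinearMap.add_apply, LinearMap.smul_apply, evalₗ_apply, smul_eq_mul]
  rw [Convex.combo_affine_apply (by field_simp), smul_eq_mul, smul_eq_mul]
  field_simp

theorem Convex.exists_eq_smul_evalₗ_of_mem_hull (hK : Convex 𝕜 K) (hne : K.Nonempty)
    {φ : (E →ᵃ[𝕜] 𝕜) →ₗ[𝕜] 𝕜} (hφ : φ ∈ PointedCone.hull 𝕜 (evalₗ 𝕜 '' K)) :
    ∃ z ∈ K, ∃ n : 𝕜, 0 ≤ n ∧ n • evalₗ 𝕜 z = φ := by
  induction hφ using Submodule.span_induction with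
  | mem φ hφ =>
    obtain ⟨z, hz, rfl⟩ := hφ
    exact ⟨z, hz, 1, zero_le_one, one_smul _ _⟩
  | zero => exact ⟨hne.some, hne.some_mem, 0, le_rfl, zero_smul _ _⟩
  | add φ χ _ _ hφ hχ =>
    obtain ⟨x, hx, m, hm, rfl⟩ := hφ
    obtain ⟨y, hy, n, hn, rfl⟩ := hχ
    obtain ⟨z, hz, hsum⟩ := hK.exists_mem_add_smul_evalₗ_eq hx hy hm hn
    exact ⟨z, hz, m + n, add_nonneg hm hn, hsum⟩
  | smul c φ _ hφ =>
    obtain ⟨z, hz, n, hn, rfl⟩ := hφ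
    exact ⟨z, hz, c * n, mul_nonneg c.2 hn, by rw [mul_smul]; rfl⟩

end Convex

theorem functional_eq_diff_of_point_evaluations_general
    {V : Type*} [NormedAddCommGroup V] [NormedSpace ℝ V] [FiniteDimensional ℝ V]
    (K : Set V) (hconv : Convex ℝ K)
    (hspan : affineSpan ℝ K = ⊤)
    (ψ : (V →ᵃ[ℝ] ℝ) →ₗ[ℝ] ℝ) :
    ∃ x ∈ K, ∃ y ∈ K, ∃ l m : ℝ, 0 ≤ l ∧ 0 ≤ m ∧
      ∀ f : V →ᵃ[ℝ] ℝ, ψ f = l * f x - m * f y := by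
  have hne : K.Nonempty := AffineSubspace.nonempty_of_affineSpan_eq_top ℝ V V hspan
  have hψ : ψ ∈ span ℝ (evalₗ ℝ '' K) := by
    rw [span_evalₗ_eq_top hspan]
    exact mem_top
  obtain ⟨φ, hφ, χ, hχ, rfl⟩ := PointedCone.mem_span_iff_exists_hull_sub.1 hψ
  obtain ⟨x, hx, l, hl, rfl⟩ := hconv.exists_eq_smul_evalₗ_of_mem_hull hne hφ
  obtain ⟨y, hy, m, hm, rfl⟩ := hconv.exists_eq_smul_evalₗ_of_mem_hull hne hχ
  exact ⟨x, hx, y, hy, l, m, hl, hm, fun f => rfl⟩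

/-- every linear functional on the space of affine functions over a
nonempty compact convex set `K` with full affine span is of the form
`f ↦ λ f(x) − μ f(y)` with `x, y ∈ K` and `λ, μ ≥ 0`. -/
theorem functional_eq_diff_of_point_evaluations
    {V : Type*} [NormedAddCommGroup V] [NormedSpace ℝ V] [FiniteDimensional ℝ V]
    (K : Set V) (hne : K.Nonempty) (hcomp : IsCompact K) (hconv : Convex ℝ K)
    (hspan : affineSpan ℝ K = ⊤)
    (ψ : (V →ᵃ[ℝ] ℝ) →ₗ[ℝ] ℝ) :
    ∃ x ∈ K, ∃ y ∈ K, ∃ l m : ℝ, 0 ≤ l ∧ 0 ≤ m ∧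
      ∀ f : V →ᵃ[ℝ] ℝ, ψ f = l * f x - m * f y :=
  functional_eq_diff_of_point_evaluations_general K hconv hspan ψ
end

section
/- Let V be a finite-dimensional real normed vector space and K ⊆ V a nonempty compact convex set whose affine span equals V. Then for every linear functional ψ on the real vector space of affine maps V → ℝ, the dual norm of ψ equals its base norm: sup{ |ψ(f)| : f : V → ℝ affine with |f(x)| ≤ 1 for all x ∈ K } = inf{ λ + μ : λ, μ ≥ 0, x, y ∈ K such that ψ(f) = λ · f(x) − μ · f(y) for all affine f : V → ℝ }. -/
/-!
Write `N` for the dual norm of `ψ`. The inequality `N ≤ l + m` for every representation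
`ψ = l • ev x - m • ev y` is the triangle inequality. Conversely, in the coordinates of an affine
basis drawn from `K`, `ψ` becomes a vector `p` and the evaluations at points of `K` the compact
convex set `S = coords '' K`. If `p` were not of the form `l • a - m • c` with `l + m ≤ N` and
`a, c ∈ S`, Hahn–Banach would give a functional `φ` with `φ < u` on this compact convex set
and `u < φ p`; the affine function `φ ∘ coords` is then bounded on `K` by `u / N` while
`ψ (φ ∘ coords) = φ p > u`, contradicting the definition of `N`.
-/

open Set Finset

namespace AffineMap

variable {k V P W : Type*} [CommRing k] [AddCommGroup V] [Module k V] [AddTorsor V P]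
  [AddCommGroup W] [Module k W]

def applyₗ (x : P) : (P →ᵃ[k] W) →ₗ[k] W where
  toFun f := f x
  map_add' _ _ := rfl
  map_smul' _ _ := rfl

@[simp]
theorem applyₗ_apply (x : P) (f : P →ᵃ[k] W) : applyₗ x f = f x := rfl

theorem sum_apply {ι : Type*} (s : Finset ι) (g : ι → P →ᵃ[k] W) (x : P) :
    (∑ i ∈ s, g i) x = ∑ i ∈ s, g i x :=
  map_sum (applyₗ x) g s

end AffineMap

namespace AffineBasis

variable {ι k V P W M : Type*} [Fintype ι] [Field k] [AddCommGroup V] [Module k V]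
  [AddTorsor V P] [AddCommGroup W] [Module k W] [AddCommGroup M] [Module k M]
  (b : AffineBasis ι k P)

theorem apply_eq_sum_coord_smul (f : P →ᵃ[k] W) (q : P) :
    f q = ∑ i, b.coord i q • f (b i) := by
  conv_lhs => rw [← b.affineCombination_coord_eq_self q]
  rw [Finset.map_affineCombination _ _ _ (b.sum_coord_apply_eq_one q),
    Finset.affineCombination_eq_linear_combination _ _ _ (b.sum_coord_apply_eq_one q)]
  rfl

theorem eq_sum_smul_coord (f : P →ᵃ[k] k) : f = ∑ i, f (b i) • b.coord i := by
  ext q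
  rw [AffineMap.sum_apply, b.apply_eq_sum_coord_smul f q]
  simp [mul_comm]

theorem linearMap_apply_eq_sum (ψ : (P →ᵃ[k] k) →ₗ[k] M) (f : P →ᵃ[k] k) :
    ψ f = ∑ i, f (b i) • ψ (b.coord i) := by
  conv_lhs => rw [b.eq_sum_smul_coord f]
  simp only [map_sum, map_smul]

theorem linearMap_ext {ψ₁ ψ₂ : (P →ᵃ[k] k) →ₗ[k] M} (h : ∀ i, ψ₁ (b.coord i) = ψ₂ (b.coord i)) :
    ψ₁ = ψ₂ := by
  ext f
  rw [b.linearMap_apply_eq_sum ψ₁, b.linearMap_apply_eq_sum ψ₂]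
  simp only [h]

theorem linearMap_apply_comp_coords (ψ : (P →ᵃ[k] k) →ₗ[k] k) (φ : (ι → k) →ₗ[k] k) :
    ψ (φ.toAffineMap.comp b.coords) = φ fun i => ψ (b.coord i) := by
  classical
  rw [b.linearMap_apply_eq_sum, φ.pi_apply_eq_sum_univ]
  refine Finset.sum_congr rfl fun i _ => ?_
  have hcoords : b.coords (b i) = fun j => if i = j then 1 else 0 := by
    ext j
    rw [coords_apply, coord_apply]
    exact if_congr eq_comm rfl rfl
  simp [hcoords, mul_comm]

end AffineBasis

theorem isCompact_triangle (r : ℝ) : IsCompact {q : ℝ × ℝ | 0 ≤ q.1 ∧ 0 ≤ q.2 ∧ q.1 + q.2 ≤ r} :=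
  (isCompact_Icc.prod isCompact_Icc).of_isClosed_subset
    ((isClosed_le continuous_const continuous_fst).inter
      ((isClosed_le continuous_const continuous_snd).inter
        (isClosed_le (continuous_fst.add continuous_snd) continuous_const)))
    fun q ⟨h₁, h₂, h⟩ => ⟨⟨h₁, by linarith⟩, ⟨h₂, show q.2 ≤ r by linarith⟩⟩

section BaseNorm

variable {F : Type*} [AddCommGroup F] [Module ℝ F]

def baseNormBall (S : Set F) (r : ℝ) : Set F :=
  {p | ∃ l m : ℝ, ∃ a ∈ S, ∃ c ∈ S, 0 ≤ l ∧ 0 ≤ m ∧ l + m ≤ r ∧ p = l • a - m • c}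

theorem isCompact_baseNormBall [TopologicalSpace F] [IsTopologicalAddGroup F]
    [ContinuousSMul ℝ F] {S : Set F} (hS : IsCompact S) (r : ℝ) :
    IsCompact (baseNormBall S r) := by
  have himage : baseNormBall S r = (fun q : (ℝ × ℝ) × F × F => q.1.1 • q.2.1 - q.1.2 • q.2.2) ''
      ({q : ℝ × ℝ | 0 ≤ q.1 ∧ 0 ≤ q.2 ∧ q.1 + q.2 ≤ r} ×ˢ S ×ˢ S) := by
    ext p
    constructor
    · rintro ⟨l, m, a, ha, c, hc, hl, hm, hlm, rfl⟩
      exact ⟨((l, m), a, c), ⟨⟨hl, hm, hlm⟩, ha, hc⟩, rfl⟩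
    · rintro ⟨⟨⟨l, m⟩, a, c⟩, ⟨⟨hl, hm, hlm⟩, ha, hc⟩, rfl⟩
      exact ⟨l, m, a, ha, c, hc, hl, hm, hlm, rfl⟩
  rw [himage]
  exact ((isCompact_triangle r).prod (hS.prod hS)).image (by fun_prop)

theorem convex_baseNormBall {S : Set F} (hS : Convex ℝ S) (r : ℝ) :
    Convex ℝ (baseNormBall S r) := by
  rintro _ ⟨l₁, m₁, a₁, ha₁, c₁, hc₁, hl₁, hm₁, hlm₁, rfl⟩
    _ ⟨l₂, m₂, a₂, ha₂, c₂, hc₂, hl₂, hm₂, hlm₂, rfl⟩ s t hs ht hst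
  obtain ⟨a, ha, ha_eq⟩ := hS.exists_mem_add_smul_eq ha₁ ha₂
    (mul_nonneg hs hl₁) (mul_nonneg ht hl₂)
  obtain ⟨c, hc, hc_eq⟩ := hS.exists_mem_add_smul_eq hc₁ hc₂
    (mul_nonneg hs hm₁) (mul_nonneg ht hm₂)
  refine ⟨s * l₁ + t * l₂, s * m₁ + t * m₂, a, ha, c, hc, by positivity, by positivity, ?_, ?_⟩
  · nlinarith
  · rw [ha_eq, hc_eq]
    simp only [smul_sub, smul_smul]
    abel

theorem mem_baseNormBall_of_forall_le [TopologicalSpace F] [IsTopologicalAddGroup F]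
    [ContinuousSMul ℝ F] [LocallyConvexSpace ℝ F] [T2Space F] {S : Set F} (hS : IsCompact S)
    (hSc : Convex ℝ S) (hne : S.Nonempty) {r : ℝ} (hr : 0 ≤ r) {p : F}
    (h : ∀ (φ : StrongDual ℝ F) (β : ℝ), 0 < β → (∀ a ∈ S, |φ a| ≤ β) → φ p ≤ r * β) :
    p ∈ baseNormBall S r := by
  by_contra hp
  obtain ⟨φ, u, hφu, huφ⟩ :=
    geometric_hahn_banach_closed_point (convex_baseNormBall hSc r)
      (isCompact_baseNormBall hS r).isClosed hp
  obtain ⟨a₀, ha₀⟩ := hne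
  have hu : 0 < u := by
    simpa using hφu 0 ⟨0, 0, a₀, ha₀, a₀, ha₀, le_rfl, le_rfl, by simpa using hr, by simp⟩
  have hbound : ∀ a ∈ S, r * |φ a| < u := fun a ha => by
    have h₁ := hφu (r • a) ⟨r, 0, a, ha, a, ha, hr, le_rfl, by simp, by simp⟩
    have h₂ := hφu (-(r • a)) ⟨0, r, a, ha, a, ha, le_rfl, hr, by simp, by simp⟩
    simp only [map_neg, map_smul, smul_eq_mul] at h₁ h₂
    rcases abs_cases (φ a) with ⟨h, -⟩ | ⟨h, -⟩ <;> rw [h] <;> linarith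
  obtain ⟨β, hβ, hφβ, hrβ⟩ : ∃ β, 0 < β ∧ (∀ a ∈ S, |φ a| ≤ β) ∧ r * β ≤ u := by
    rcases hr.eq_or_lt with rfl | hr
    · obtain ⟨C, hC⟩ := hS.exists_bound_of_continuousOn φ.continuous.continuousOn
      exact ⟨max C 1, by positivity, fun a ha => (hC a ha).trans (le_max_left _ _),
        by simpa using hu.le⟩
    · exact ⟨u / r, by positivity, fun a ha => (le_div_iff₀' hr).2 (hbound a ha).le,
        (mul_div_cancel₀ u hr.ne').le⟩
  exact ((h φ β hβ hφβ).trans hrβ).not_gt huφ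

end BaseNorm

theorem AffineBasis.abs_linearMap_apply_le {ι V P : Type*} [Fintype ι] [AddCommGroup V]
    [Module ℝ V] [AddTorsor V P] (b : AffineBasis ι ℝ P) (ψ : (P →ᵃ[ℝ] ℝ) →ₗ[ℝ] ℝ)
    {f : P →ᵃ[ℝ] ℝ} (hf : ∀ i, |f (b i)| ≤ 1) : |ψ f| ≤ ∑ i, |ψ (b.coord i)| := by
  rw [b.linearMap_apply_eq_sum]
  refine (abs_sum_le_sum_abs _ _).trans (sum_le_sum fun i _ => ?_)
  rw [smul_eq_mul, abs_mul]
  exact mul_le_of_le_one_left (abs_nonneg _) (hf i)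

theorem abs_apply_le_mul_of_forall_abs_le_one {V P : Type*} [AddCommGroup V] [Module ℝ V]
    [AddTorsor V P] (ψ : (P →ᵃ[ℝ] ℝ) →ₗ[ℝ] ℝ) {K : Set P} {N : ℝ}
    (hN : ∀ f : P →ᵃ[ℝ] ℝ, (∀ x ∈ K, |f x| ≤ 1) → |ψ f| ≤ N) {β : ℝ} (hβ : 0 < β)
    {f : P →ᵃ[ℝ] ℝ} (hf : ∀ x ∈ K, |f x| ≤ β) : |ψ f| ≤ N * β := by
  have hscaled := hN (β⁻¹ • f) fun x hx => by
    rw [AffineMap.coe_smul, Pi.smul_apply, smul_eq_mul, abs_mul, abs_inv, abs_of_pos hβ,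
      inv_mul_le_iff₀ hβ, mul_one]
    exact hf x hx
  rwa [map_smul, smul_eq_mul, abs_mul, abs_inv, abs_of_pos hβ, inv_mul_le_iff₀ hβ,
    mul_comm] at hscaled

theorem abs_apply_le_add_of_forall_eq {V P : Type*} [AddCommGroup V] [Module ℝ V]
    [AddTorsor V P] {ψ : (P →ᵃ[ℝ] ℝ) →ₗ[ℝ] ℝ} {K : Set P} {l m : ℝ} {x y : P} (hl : 0 ≤ l)
    (hm : 0 ≤ m) (hx : x ∈ K) (hy : y ∈ K) (hψ : ∀ f, ψ f = l * f x - m * f y)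
    {f : P →ᵃ[ℝ] ℝ} (hf : ∀ z ∈ K, |f z| ≤ 1) : |ψ f| ≤ l + m := by
  have hfx := abs_le.1 (hf x hx)
  have hfy := abs_le.1 (hf y hy)
  rw [hψ, abs_le]
  constructor <;> nlinarith

/-- for every linear functional `ψ` on the space of affine functions over a
nonempty compact convex set `K` with full affine span, the dual norm of `ψ` equals its
base norm. -/
theorem dual_norm_eq_base_norm
    {V : Type*} [NormedAddCommGroup V] [NormedSpace ℝ V] [FiniteDimensional ℝ V]
    (K : Set V) (hne : K.Nonempty) (hcomp : IsCompact K) (hconv : Convex ℝ K)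
    (hspan : affineSpan ℝ K = ⊤)
    (ψ : (V →ᵃ[ℝ] ℝ) →ₗ[ℝ] ℝ) :
    sSup {r : ℝ | ∃ f : V →ᵃ[ℝ] ℝ, (∀ x ∈ K, |f x| ≤ 1) ∧ r = |ψ f|} =
    sInf {r : ℝ | ∃ l m : ℝ, ∃ x ∈ K, ∃ y ∈ K, 0 ≤ l ∧ 0 ≤ m ∧
      (∀ f : V →ᵃ[ℝ] ℝ, ψ f = l * f x - m * f y) ∧ r = l + m} := by
  obtain ⟨s, hsK, b, hb⟩ := AffineBasis.exists_affine_subbasis hspan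
  have hbK : ∀ i, b i ∈ K := fun i => hb ▸ hsK i.2
  have := b.finite
  have := Fintype.ofFinite s
  set A := {r : ℝ | ∃ f : V →ᵃ[ℝ] ℝ, (∀ x ∈ K, |f x| ≤ 1) ∧ r = |ψ f|}
  have hA₀ : (0 : ℝ) ∈ A := ⟨0, by simp, by simp⟩
  have hA : BddAbove A := ⟨_, by
    rintro _ ⟨f, hf, rfl⟩
    exact b.abs_linearMap_apply_le ψ fun i => hf _ (hbK i)⟩
  have hψA : ∀ f : V →ᵃ[ℝ] ℝ, (∀ x ∈ K, |f x| ≤ 1) → |ψ f| ≤ sSup A :=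
    fun f hf => le_csSup hA ⟨f, hf, rfl⟩
  obtain ⟨l, m, _, ⟨x, hx, rfl⟩, _, ⟨y, hy, rfl⟩, hl, hm, hlm, hp⟩ :=
    mem_baseNormBall_of_forall_le (hcomp.image b.coords.continuous_of_finiteDimensional)
      (hconv.affine_image b.coords) (hne.image _) (le_csSup hA hA₀)
      (p := fun i => ψ (b.coord i)) fun φ β hβ hφ => by
        rw [← ContinuousLinearMap.coe_coe, ← b.linearMap_apply_comp_coords]
        refine (le_abs_self _).trans (abs_apply_le_mul_of_forall_abs_le_one ψ hψA hβ ?_)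
        exact fun x hx => hφ _ (mem_image_of_mem _ hx)
  have hψ : ψ = l • AffineMap.applyₗ x - m • AffineMap.applyₗ y :=
    b.linearMap_ext fun i => by simpa [AffineBasis.coords_apply] using congrFun hp i
  have hB : l + m ∈ {r : ℝ | ∃ l m : ℝ, ∃ x ∈ K, ∃ y ∈ K, 0 ≤ l ∧ 0 ≤ m ∧
      (∀ f : V →ᵃ[ℝ] ℝ, ψ f = l * f x - m * f y) ∧ r = l + m} :=
    ⟨l, m, x, hx, y, hy, hl, hm, fun f => by simp [hψ], rfl⟩
  refine le_antisymm (le_csInf ⟨_, hB⟩ ?_) ((csInf_le ⟨0, ?_⟩ hB).trans hlm)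
  · rintro _ ⟨l', m', x', hx', y', hy', hl', hm', hψ', rfl⟩
    refine csSup_le ⟨0, hA₀⟩ ?_
    rintro _ ⟨f, hf, rfl⟩
    exact abs_apply_le_add_of_forall_eq hl' hm' hx' hy' hψ' hf
  · rintro _ ⟨l', m', -, -, -, -, hl', hm', -, rfl⟩
    positivity
end

section
/- Let V be a finite-dimensional real normed vector space and K ⊆ V a nonempty compact convex set. Let x₀, x₁ ∈ K and λ ∈ [0,1]. Then the optimal success probability in the discrimination task equals sup{ λ · f(x₀) + (1−λ) · (1 − f(x₁)) : f : V → ℝ affine with 0 ≤ f(x) ≤ 1 for all x ∈ K } = (1/2) · ( 1 + sup{ |λ · f(x₀) − (1−λ) · f(x₁)| : f : V → ℝ affine with |f(x)| ≤ 1 for all x ∈ K } ). -/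
/-!
Writing an effect as `f = (1 + g) / 2` identifies effects on `K` with affine functions `g`
satisfying `|g| ≤ 1` on `K`, and turns the success probability of `f` into
`(1 + (λ g(x₀) - (1-λ) g(x₁))) / 2`. The set of these values of `λ g(x₀) - (1-λ) g(x₁)` is
symmetric under `g ↦ -g`, so its supremum equals the supremum of its absolute values.
-/

open Set

theorem sSup_abs_image_eq_of_neg_mem {S : Set ℝ} (hS : ∀ t ∈ S, -t ∈ S) :
    sSup (abs '' S) = sSup S := by
  refine csSup_eq_csSup_of_forall_exists_le ?_
    fun t ht => ⟨|t|, mem_image_of_mem _ ht, le_abs_self t⟩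
  rintro _ ⟨t, ht, rfl⟩
  rcases abs_choice t with h | h <;> rw [h]
  exacts [⟨t, ht, le_rfl⟩, ⟨-t, hS t ht, le_rfl⟩]

section WeightedDifferences

variable {V : Type*} [AddCommGroup V] [Module ℝ V]

def weightedDifferences (K : Set V) (x₀ x₁ : V) (l : ℝ) : Set ℝ :=
  {t | ∃ g : V →ᵃ[ℝ] ℝ, (∀ x ∈ K, |g x| ≤ 1) ∧ t = l * g x₀ - (1 - l) * g x₁}

variable (K : Set V) (x₀ x₁ : V) (l : ℝ)

theorem neg_mem_weightedDifferences {t : ℝ} (ht : t ∈ weightedDifferences K x₀ x₁ l) :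
    -t ∈ weightedDifferences K x₀ x₁ l := by
  obtain ⟨g, hg, rfl⟩ := ht
  refine ⟨-g, fun x hx => ?_, ?_⟩
  · simpa using hg x hx
  · simp only [AffineMap.coe_neg, Pi.neg_apply]
    ring

theorem zero_mem_weightedDifferences : (0 : ℝ) ∈ weightedDifferences K x₀ x₁ l :=
  ⟨0, fun _ _ => by simp, by simp⟩

theorem bddAbove_weightedDifferences (hx₀ : x₀ ∈ K) (hx₁ : x₁ ∈ K) (hl : l ∈ Icc (0 : ℝ) 1) :
    BddAbove (weightedDifferences K x₀ x₁ l) := by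
  refine ⟨1, ?_⟩
  rintro _ ⟨g, hg, rfl⟩
  obtain ⟨h₀, h₀'⟩ := abs_le.mp (hg x₀ hx₀)
  obtain ⟨h₁, h₁'⟩ := abs_le.mp (hg x₁ hx₁)
  nlinarith [hl.1, hl.2]

theorem successProbabilities_eq_image_weightedDifferences :
    {r : ℝ | ∃ f : V →ᵃ[ℝ] ℝ, (∀ x ∈ K, 0 ≤ f x ∧ f x ≤ 1) ∧
        r = l * f x₀ + (1 - l) * (1 - f x₁)} =
      (fun t => (1 + t) / 2) '' weightedDifferences K x₀ x₁ l := by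
  ext r
  constructor
  · rintro ⟨f, hf, rfl⟩
    refine ⟨l * (2 * f x₀ - 1) - (1 - l) * (2 * f x₁ - 1),
      ⟨(2 : ℝ) • f - AffineMap.const ℝ V 1, fun x hx => ?_, by simp⟩, by ring⟩
    have := hf x hx
    simp only [AffineMap.coe_sub, AffineMap.coe_smul, AffineMap.coe_const, Pi.sub_apply,
      Pi.smul_apply, Function.const_apply, smul_eq_mul]
    exact abs_le.mpr ⟨by linarith, by linarith⟩
  · rintro ⟨_, ⟨g, hg, rfl⟩, rfl⟩
    refine ⟨(1 / 2 : ℝ) • (g + AffineMap.const ℝ V 1), fun x hx => ?_, ?_⟩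
    all_goals simp only [AffineMap.coe_smul, AffineMap.coe_add, AffineMap.coe_const,
      Pi.smul_apply, Pi.add_apply, Function.const_apply, smul_eq_mul]
    · have := abs_le.mp (hg x hx)
      constructor <;> linarith
    · ring

end WeightedDifferences

theorem discrimination_success_probability_general
    {V : Type*} [NormedAddCommGroup V] [NormedSpace ℝ V]
    (K : Set V)
    (x₀ x₁ : V) (hx₀ : x₀ ∈ K) (hx₁ : x₁ ∈ K)
    (l : ℝ) (hl : l ∈ Set.Icc (0 : ℝ) 1) :
    sSup {r : ℝ | ∃ f : V →ᵃ[ℝ] ℝ, (∀ x ∈ K, 0 ≤ f x ∧ f x ≤ 1) ∧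
        r = l * f x₀ + (1 - l) * (1 - f x₁)} =
    (1 / 2) * (1 + sSup {r : ℝ | ∃ f : V →ᵃ[ℝ] ℝ, (∀ x ∈ K, |f x| ≤ 1) ∧
        r = |l * f x₀ - (1 - l) * f x₁|}) := by
  have habs : {r : ℝ | ∃ f : V →ᵃ[ℝ] ℝ, (∀ x ∈ K, |f x| ≤ 1) ∧
      r = |l * f x₀ - (1 - l) * f x₁|} = abs '' weightedDifferences K x₀ x₁ l := by
    ext r
    exact ⟨fun ⟨f, hf, hr⟩ => ⟨_, ⟨f, hf, rfl⟩, hr.symm⟩,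
      fun ⟨_, ⟨f, hf, ht⟩, hr⟩ => ⟨f, hf, hr ▸ ht ▸ rfl⟩⟩
  rw [successProbabilities_eq_image_weightedDifferences, habs,
    sSup_abs_image_eq_of_neg_mem fun _ => neg_mem_weightedDifferences K x₀ x₁ l,
    ← Monotone.map_csSup_of_continuousAt (by fun_prop)
      (fun _ _ h => by linarith) ⟨0, zero_mem_weightedDifferences K x₀ x₁ l⟩
      (bddAbove_weightedDifferences K x₀ x₁ l hx₀ hx₁ hl)]
  ring

/-- the optimal success probability for discriminating states `x₀, x₁ ∈ K`
with a priori probabilities `λ, 1−λ` equals `(1/2)(1 + ‖λ x₀ − (1−λ) x₁‖)`, with the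
norm expressed as a supremum over affine functions bounded by `1` in absolute value
on `K`. -/
theorem discrimination_success_probability
    {V : Type*} [NormedAddCommGroup V] [NormedSpace ℝ V] [FiniteDimensional ℝ V]
    (K : Set V) (hne : K.Nonempty) (hcomp : IsCompact K) (hconv : Convex ℝ K)
    (x₀ x₁ : V) (hx₀ : x₀ ∈ K) (hx₁ : x₁ ∈ K)
    (l : ℝ) (hl : l ∈ Set.Icc (0 : ℝ) 1) :
    sSup {r : ℝ | ∃ f : V →ᵃ[ℝ] ℝ, (∀ x ∈ K, 0 ≤ f x ∧ f x ≤ 1) ∧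
        r = l * f x₀ + (1 - l) * (1 - f x₁)} =
    (1 / 2) * (1 + sSup {r : ℝ | ∃ f : V →ᵃ[ℝ] ℝ, (∀ x ∈ K, |f x| ≤ 1) ∧
        r = |l * f x₀ - (1 - l) * f x₁|}) :=
  discrimination_success_probability_general K x₀ x₁ hx₀ hx₁ l hl
end

section
/- With K_A ⊆ V_A, K_B ⊆ V_B, K_C ⊆ V_C as in the GPT setup, the maximal tensor product is associative: the canonical associativity isomorphism α : (V_A ⊗ V_B) ⊗ V_C ≅ V_A ⊗ (V_B ⊗ V_C) maps (K_A ⊗max K_B) ⊗max K_C onto K_A ⊗max (K_B ⊗max K_C), where the iterated maximal tensor products are formed using as effects on K_A ⊗max K_B (respectively on K_B ⊗max K_C) all linear functionals on V_A ⊗ V_B (respectively V_B ⊗ V_C) taking values in [0,1] on that set, with unit functional e_A ⊗ e_B (respectively e_B ⊗ e_C). -/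
/-!
An effect `F` on `K ⊗max L` is nonnegative on every `w` in the cone dual to the product
effects: if `t = (e_K ⊗ e_L)(w) > 0` then `t⁻¹ • w ∈ K ⊗max L`, and the degenerate case
`t = 0` is avoided by perturbing `w` to `w + ε • (x ⊗ y)` with `x ∈ K`, `y ∈ L`, and letting
`ε → 0`. Contracting the third factor against an effect on `K_C` lands in that cone, so
membership in `(K_A ⊗max K_B) ⊗max K_C` is tested by the triple products `f ⊗ g ⊗ h` of effects
alone, and likewise for `K_A ⊗max (K_B ⊗max K_C)`; the associator intertwines these functionals.
-/

open TensorProduct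

/-- The linear functional `f ⊗ g` on `V ⊗ W` induced by linear functionals `f, g`. -/
noncomputable def tensorFunctional {V W : Type*} [AddCommGroup V] [Module ℝ V]
    [AddCommGroup W] [Module ℝ W] (f : V →ₗ[ℝ] ℝ) (g : W →ₗ[ℝ] ℝ) :
    V ⊗[ℝ] W →ₗ[ℝ] ℝ :=
  TensorProduct.lift ((LinearMap.mul ℝ ℝ).compl₁₂ f g)

/-- The maximal tensor product of two state spaces with unit functionals `eK, eL`. -/
noncomputable def maxTensor {V W : Type*} [AddCommGroup V] [Module ℝ V]
    [AddCommGroup W] [Module ℝ W] (K : Set V) (L : Set W)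
    (eK : V →ₗ[ℝ] ℝ) (eL : W →ₗ[ℝ] ℝ) : Set (V ⊗[ℝ] W) :=
  {z | (∀ f : V →ₗ[ℝ] ℝ, ∀ g : W →ₗ[ℝ] ℝ, (∀ x ∈ K, 0 ≤ f x ∧ f x ≤ 1) →
        (∀ y ∈ L, 0 ≤ g y ∧ g y ≤ 1) → 0 ≤ tensorFunctional f g z) ∧
      tensorFunctional eK eL z = 1}

def IsEffect {V : Type*} [AddCommGroup V] [Module ℝ V] (K : Set V) (f : V →ₗ[ℝ] ℝ) : Prop :=
  ∀ x ∈ K, 0 ≤ f x ∧ f x ≤ 1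

def maxTensorCone {V W : Type*} [AddCommGroup V] [Module ℝ V] [AddCommGroup W] [Module ℝ W]
    (K : Set V) (L : Set W) : Set (V ⊗[ℝ] W) :=
  {w | ∀ f g, IsEffect K f → IsEffect L g → 0 ≤ tensorFunctional f g w}

section

variable {U V W : Type*} [AddCommGroup U] [Module ℝ U] [AddCommGroup V] [Module ℝ V]
  [AddCommGroup W] [Module ℝ W]

@[simp]
theorem tensorFunctional_tmul (f : V →ₗ[ℝ] ℝ) (g : W →ₗ[ℝ] ℝ) (x : V) (y : W) :
    tensorFunctional f g (x ⊗ₜ y) = f x * g y := by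
  simp [tensorFunctional]

theorem tensorFunctional_sub_left (f f' : V →ₗ[ℝ] ℝ) (g : W →ₗ[ℝ] ℝ) :
    tensorFunctional (f - f') g = tensorFunctional f g - tensorFunctional f' g :=
  TensorProduct.ext' fun x y => by simp [sub_mul]

theorem tensorFunctional_sub_right (f : V →ₗ[ℝ] ℝ) (g g' : W →ₗ[ℝ] ℝ) :
    tensorFunctional f (g - g') = tensorFunctional f g - tensorFunctional f g' :=
  TensorProduct.ext' fun x y => by simp [mul_sub]

theorem tensorFunctional_apply_eq_rid_lTensor (F : V →ₗ[ℝ] ℝ) (g : W →ₗ[ℝ] ℝ)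
    (z : V ⊗[ℝ] W) : tensorFunctional F g z = F (TensorProduct.rid ℝ V (g.lTensor V z)) := by
  induction z using TensorProduct.induction_on with
  | zero => simp
  | tmul x y => simp [mul_comm]
  | add z z' hz hz' => simp only [map_add, hz, hz']

theorem tensorFunctional_apply_eq_lid_rTensor (f : V →ₗ[ℝ] ℝ) (G : W →ₗ[ℝ] ℝ)
    (z : V ⊗[ℝ] W) : tensorFunctional f G z = G (TensorProduct.lid ℝ W (f.rTensor W z)) := by
  induction z using TensorProduct.induction_on with
  | zero => simp
  | tmul x y => simp
  | add z z' hz hz' => simp only [map_add, hz, hz']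

theorem tensorFunctional_assoc (f : U →ₗ[ℝ] ℝ) (g : V →ₗ[ℝ] ℝ) (h : W →ₗ[ℝ] ℝ)
    (z : (U ⊗[ℝ] V) ⊗[ℝ] W) :
    tensorFunctional f (tensorFunctional g h) (TensorProduct.assoc ℝ U V W z) =
      tensorFunctional (tensorFunctional f g) h z := by
  induction z using TensorProduct.induction_on with
  | zero => simp
  | tmul xy w =>
    induction xy using TensorProduct.induction_on with
    | zero => simp
    | tmul x y => simp [mul_assoc]
    | add a b ha hb => simp only [add_tmul, map_add, ha, hb]
  | add z z' hz hz' => simp only [map_add, hz, hz']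

variable {K : Set V} {L : Set W} {eK : V →ₗ[ℝ] ℝ} {eL : W →ₗ[ℝ] ℝ}

theorem isEffect_of_forall_eq_one (he : ∀ x ∈ K, eK x = 1) : IsEffect K eK :=
  fun x hx => by simp [he x hx]

theorem IsEffect.sub_of_forall_eq_one {f : V →ₗ[ℝ] ℝ} (hf : IsEffect K f)
    (he : ∀ x ∈ K, eK x = 1) : IsEffect K (eK - f) := fun x hx => by
  simp only [LinearMap.sub_apply, he x hx]
  constructor <;> linarith [hf x hx]

theorem mem_maxTensor_iff {z : V ⊗[ℝ] W} :
    z ∈ maxTensor K L eK eL ↔ z ∈ maxTensorCone K L ∧ tensorFunctional eK eL z = 1 :=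
  Iff.rfl

theorem tmul_mem_maxTensorCone {x : V} {y : W} (hx : x ∈ K) (hy : y ∈ L) :
    x ⊗ₜ y ∈ maxTensorCone K L := fun f g hf hg => by
  simpa using mul_nonneg (hf x hx).1 (hg y hy).1

theorem tmul_mem_maxTensor {x : V} {y : W} (hx : x ∈ K) (hy : y ∈ L)
    (heK : ∀ x ∈ K, eK x = 1) (heL : ∀ y ∈ L, eL y = 1) : x ⊗ₜ y ∈ maxTensor K L eK eL :=
  ⟨tmul_mem_maxTensorCone hx hy, by simp [heK x hx, heL y hy]⟩

theorem add_smul_mem_maxTensorCone {w w' : V ⊗[ℝ] W} (hw : w ∈ maxTensorCone K L)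
    (hw' : w' ∈ maxTensorCone K L) {c : ℝ} (hc : 0 ≤ c) : w + c • w' ∈ maxTensorCone K L :=
  fun f g hf hg => by
    simpa using add_nonneg (hw f g hf hg) (mul_nonneg hc (hw' f g hf hg))

theorem inv_smul_mem_maxTensor {w : V ⊗[ℝ] W} (hw : w ∈ maxTensorCone K L)
    (ht : 0 < tensorFunctional eK eL w) :
    (tensorFunctional eK eL w)⁻¹ • w ∈ maxTensor K L eK eL := by
  refine ⟨fun f g hf hg => ?_, by simp [ht.ne']⟩
  simpa using mul_nonneg (inv_nonneg.mpr ht.le) (hw f g hf hg)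

theorem isEffect_tensorFunctional {f : V →ₗ[ℝ] ℝ} {g : W →ₗ[ℝ] ℝ} (hf : IsEffect K f)
    (hg : IsEffect L g) (heK : ∀ x ∈ K, eK x = 1) (heL : ∀ y ∈ L, eL y = 1) :
    IsEffect (maxTensor K L eK eL) (tensorFunctional f g) := by
  rintro z ⟨hz, hunit⟩
  have hfg := hz f g hf hg
  have hf' := hz _ g (hf.sub_of_forall_eq_one heK) hg
  have hg' := hz eK _ (isEffect_of_forall_eq_one heK) (hg.sub_of_forall_eq_one heL)
  rw [tensorFunctional_sub_left, LinearMap.sub_apply] at hf'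
  rw [tensorFunctional_sub_right, LinearMap.sub_apply] at hg'
  exact ⟨hfg, by linarith⟩

theorem IsEffect.nonneg_of_mem_maxTensorCone {F : V ⊗[ℝ] W →ₗ[ℝ] ℝ}
    (hF : IsEffect (maxTensor K L eK eL) F) (hK : K.Nonempty) (hL : L.Nonempty)
    (heK : ∀ x ∈ K, eK x = 1) (heL : ∀ y ∈ L, eL y = 1) {w : V ⊗[ℝ] W}
    (hw : w ∈ maxTensorCone K L) : 0 ≤ F w := by
  obtain ⟨x, hx⟩ := hK
  obtain ⟨y, hy⟩ := hL
  refine le_of_forall_pos_le_add fun ε hε => ?_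
  set w' := w + ε • x ⊗ₜ[ℝ] y
  have hw' : w' ∈ maxTensorCone K L := add_smul_mem_maxTensorCone hw
    (tmul_mem_maxTensorCone hx hy) hε.le
  have ht : tensorFunctional eK eL w' = tensorFunctional eK eL w + ε := by
    simp [w', heK x hx, heL y hy]
  have ht_pos : 0 < tensorFunctional eK eL w' := by
    linarith [hw eK eL (isEffect_of_forall_eq_one heK) (isEffect_of_forall_eq_one heL)]
  have hFw' : 0 ≤ F w' := by
    have := (hF _ (inv_smul_mem_maxTensor hw' ht_pos)).1
    rwa [map_smul, smul_eq_mul, mul_nonneg_iff_of_pos_left (inv_pos.mpr ht_pos)] at this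
  have hFxy : F (x ⊗ₜ y) ≤ 1 := (hF _ (tmul_mem_maxTensor hx hy heK heL)).2
  have hFw'_eq : F w' = F w + ε * F (x ⊗ₜ y) := by simp [w']
  linarith [mul_le_mul_of_nonneg_left hFxy hε.le]

end

section

variable {VA VB VC : Type*} [AddCommGroup VA] [Module ℝ VA] [AddCommGroup VB] [Module ℝ VB]
  [AddCommGroup VC] [Module ℝ VC] {KA : Set VA} {KB : Set VB} {KC : Set VC}

theorem mem_maxTensorCone_maxTensor_left_iff (hKA : KA.Nonempty) (hKB : KB.Nonempty)
    {eA : VA →ₗ[ℝ] ℝ} {eB : VB →ₗ[ℝ] ℝ} (heA : ∀ x ∈ KA, eA x = 1)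
    (heB : ∀ y ∈ KB, eB y = 1) {z : (VA ⊗[ℝ] VB) ⊗[ℝ] VC} :
    z ∈ maxTensorCone (maxTensor KA KB eA eB) KC ↔
      ∀ f g h, IsEffect KA f → IsEffect KB g → IsEffect KC h →
        0 ≤ tensorFunctional (tensorFunctional f g) h z := by
  refine ⟨fun hz f g h hf hg hh => hz _ h (isEffect_tensorFunctional hf hg heA heB) hh,
    fun hz F h hF hh => ?_⟩
  rw [tensorFunctional_apply_eq_rid_lTensor]
  refine hF.nonneg_of_mem_maxTensorCone hKA hKB heA heB fun f g hf hg => ?_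
  rw [← tensorFunctional_apply_eq_rid_lTensor]
  exact hz f g h hf hg hh

theorem mem_maxTensorCone_maxTensor_right_iff (hKB : KB.Nonempty) (hKC : KC.Nonempty)
    {eB : VB →ₗ[ℝ] ℝ} {eC : VC →ₗ[ℝ] ℝ} (heB : ∀ y ∈ KB, eB y = 1)
    (heC : ∀ w ∈ KC, eC w = 1) {z : VA ⊗[ℝ] (VB ⊗[ℝ] VC)} :
    z ∈ maxTensorCone KA (maxTensor KB KC eB eC) ↔
      ∀ f g h, IsEffect KA f → IsEffect KB g → IsEffect KC h →
        0 ≤ tensorFunctional f (tensorFunctional g h) z := by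
  refine ⟨fun hz f g h hf hg hh => hz f _ hf (isEffect_tensorFunctional hg hh heB heC),
    fun hz f G hf hG => ?_⟩
  rw [tensorFunctional_apply_eq_lid_rTensor]
  refine hG.nonneg_of_mem_maxTensorCone hKB hKC heB heC fun g h hg hh => ?_
  rw [← tensorFunctional_apply_eq_lid_rTensor]
  exact hz f g h hf hg hh

end

theorem maxTensor_assoc_general
    {VA VB VC : Type*}
    [NormedAddCommGroup VA] [NormedSpace ℝ VA]
    [NormedAddCommGroup VB] [NormedSpace ℝ VB]
    [NormedAddCommGroup VC] [NormedSpace ℝ VC]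
    (KA : Set VA) (KB : Set VB) (KC : Set VC)
    (hneA : KA.Nonempty)
    (hneB : KB.Nonempty)
    (hneC : KC.Nonempty)
    (eA : VA →ₗ[ℝ] ℝ) (eB : VB →ₗ[ℝ] ℝ) (eC : VC →ₗ[ℝ] ℝ)
    (heA : ∀ x ∈ KA, eA x = 1) (heB : ∀ y ∈ KB, eB y = 1) (heC : ∀ w ∈ KC, eC w = 1) :
    ⇑(TensorProduct.assoc ℝ VA VB VC) ''
        maxTensor (maxTensor KA KB eA eB) KC (tensorFunctional eA eB) eC
      = maxTensor KA (maxTensor KB KC eB eC) eA (tensorFunctional eB eC) := by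
  ext z
  rw [LinearEquiv.image_eq_preimage_symm, Set.mem_preimage, mem_maxTensor_iff, mem_maxTensor_iff,
    mem_maxTensorCone_maxTensor_left_iff hneA hneB heA heB,
    mem_maxTensorCone_maxTensor_right_iff hneB hneC heB heC]
  simp only [← tensorFunctional_assoc, LinearEquiv.apply_symm_apply]

/-- the maximal tensor product is associative: the canonical associativity
isomorphism maps `(K_A ⊗max K_B) ⊗max K_C` onto `K_A ⊗max (K_B ⊗max K_C)`, where the
iterated maximal tensor products use as effects all linear functionals taking values in
`[0,1]` on the respective maximal tensor product, with unit `e_A ⊗ e_B` resp.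
`e_B ⊗ e_C`. -/
theorem maxTensor_assoc
    {VA VB VC : Type*}
    [NormedAddCommGroup VA] [NormedSpace ℝ VA] [FiniteDimensional ℝ VA]
    [NormedAddCommGroup VB] [NormedSpace ℝ VB] [FiniteDimensional ℝ VB]
    [NormedAddCommGroup VC] [NormedSpace ℝ VC] [FiniteDimensional ℝ VC]
    (KA : Set VA) (KB : Set VB) (KC : Set VC)
    (hneA : KA.Nonempty) (hcompA : IsCompact KA) (hconvA : Convex ℝ KA)
    (hneB : KB.Nonempty) (hcompB : IsCompact KB) (hconvB : Convex ℝ KB)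
    (hneC : KC.Nonempty) (hcompC : IsCompact KC) (hconvC : Convex ℝ KC)
    (hspanA : Submodule.span ℝ KA = ⊤) (hspanB : Submodule.span ℝ KB = ⊤)
    (hspanC : Submodule.span ℝ KC = ⊤)
    (eA : VA →ₗ[ℝ] ℝ) (eB : VB →ₗ[ℝ] ℝ) (eC : VC →ₗ[ℝ] ℝ)
    (heA : ∀ x ∈ KA, eA x = 1) (heB : ∀ y ∈ KB, eB y = 1) (heC : ∀ w ∈ KC, eC w = 1) :
    ⇑(TensorProduct.assoc ℝ VA VB VC) ''
        maxTensor (maxTensor KA KB eA eB) KC (tensorFunctional eA eB) eC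
      = maxTensor KA (maxTensor KB KC eB eC) eA (tensorFunctional eB eC) :=
  maxTensor_assoc_general KA KB KC hneA hneB hneC eA eB eC heA heB heC
end

section
/- No-broadcasting theorem: let V be a finite-dimensional real vector space, K ⊆ V a nonempty compact convex set whose linear span equals V, and e : V → ℝ a linear functional with e(x) = 1 for all x ∈ K. Then there exists a linear map Φ : V → V ⊗ V such that Φ(x) = x ⊗ x for every extreme point x of K if and only if the set of extreme points of K is linearly independent (i.e., if and only if K is a simplex). -/
/-!
If `Φ x = x ⊗ x` on a set `s`, then contracting the first tensor factor of `Φ` against a functional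
`f` gives an endomorphism `L` with `L x = f x • x` on `s`. On a finite part of `s` one can choose
`f` injective, so its points, being nonzero as `e = 1` on `K`, are eigenvectors of `L` with
distinct eigenvalues, hence linearly independent. Conversely a linearly independent set can be
sent anywhere by a linear map.
-/

open TensorProduct Module

section Broadcasting

variable {𝕜 V W : Type*} [Field 𝕜] [AddCommGroup V] [Module 𝕜 V] [AddCommGroup W] [Module 𝕜 W]

theorem LinearIndependent.exists_linearMap_apply_eq {ι : Type*} {v : ι → V}
    (hv : LinearIndependent 𝕜 v) (w : ι → W) : ∃ Φ : V →ₗ[𝕜] W, ∀ i, Φ (v i) = w i := by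
  obtain ⟨ψ, hψ⟩ := (Finsupp.linearCombination 𝕜 v).exists_leftInverse_of_injective
    (LinearMap.ker_eq_bot.mpr hv)
  refine ⟨Finsupp.linearCombination 𝕜 w ∘ₗ ψ, fun i => ?_⟩
  have hψi : ψ (v i) = Finsupp.single i 1 := by
    simpa using LinearMap.congr_fun hψ (Finsupp.single i 1)
  simp [hψi]

theorem Module.exists_dual_injOn_of_finite [Infinite 𝕜] {t : Set V} (ht : t.Finite) :
    ∃ f : Dual 𝕜 V, Set.InjOn f t := by
  have : Finite t := ht.to_subtype
  obtain ⟨f, hf⟩ := exists_dual_forall_apply_ne_zero (K := 𝕜)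
    (fun p : {p : t × t // p.1 ≠ p.2} => (p.1.1 : V) - p.1.2)
    (fun p => sub_ne_zero.mpr (Subtype.coe_ne_coe.mpr p.2))
  refine ⟨f, fun x hx y hy hxy => ?_⟩
  by_contra hne
  exact hf ⟨(⟨x, hx⟩, ⟨y, hy⟩), by simpa using hne⟩ (by simp [hxy])

theorem linearIndepOn_of_apply_eq_tmul_self [Infinite 𝕜] {s : Set V} (h0 : 0 ∉ s)
    (Φ : V →ₗ[𝕜] V ⊗[𝕜] V) (hΦ : ∀ x ∈ s, Φ x = x ⊗ₜ x) : LinearIndepOn 𝕜 id s := by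
  refine linearIndepOn_of_finite s fun t hts ht => ?_
  obtain ⟨f, hf⟩ := exists_dual_injOn_of_finite (𝕜 := 𝕜) ht
  let L : End 𝕜 V := TensorProduct.lid 𝕜 V ∘ₗ LinearMap.rTensor V f ∘ₗ Φ
  have hL : ∀ x ∈ s, L x = f x • x := fun x hx => by simp [L, hΦ x hx]
  exact L.eigenvectors_linearIndependent' (fun x : t => f x) hf.injective _
    fun x => ⟨Module.End.mem_eigenspace_iff.mpr (hL x (hts x.2)), fun h => h0 (h ▸ hts x.2)⟩

end Broadcasting

theorem no_broadcasting_general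
    {V : Type*} [NormedAddCommGroup V] [NormedSpace ℝ V]
    (K : Set V)
    (e : V →ₗ[ℝ] ℝ) (he : ∀ x ∈ K, e x = 1) :
    (∃ Φ : V →ₗ[ℝ] V ⊗[ℝ] V, ∀ x ∈ Set.extremePoints ℝ K, Φ x = x ⊗ₜ[ℝ] x) ↔
    LinearIndependent ℝ (Subtype.val : Set.extremePoints ℝ K → V) := by
  refine ⟨fun ⟨Φ, hΦ⟩ => linearIndepOn_of_apply_eq_tmul_self ?_ Φ hΦ, fun h => ?_⟩
  · intro h0
    simpa using he 0 (extremePoints_subset h0)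
  · simpa using h.exists_linearMap_apply_eq fun x => (x : V) ⊗ₜ[ℝ] (x : V)

/-- no-broadcasting theorem: there exists a linear universal
broadcasting map `Φ : V → V ⊗ V` with `Φ x = x ⊗ x` on all extreme points of `K`
if and only if the set of extreme points of `K` is linearly independent, i.e., iff
`K` is a simplex. -/
theorem no_broadcasting
    {V : Type*} [NormedAddCommGroup V] [NormedSpace ℝ V] [FiniteDimensional ℝ V]
    (K : Set V) (hne : K.Nonempty) (hcomp : IsCompact K) (hconv : Convex ℝ K)
    (hspan : Submodule.span ℝ K = ⊤)
    (e : V →ₗ[ℝ] ℝ) (he : ∀ x ∈ K, e x = 1) :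
    (∃ Φ : V →ₗ[ℝ] V ⊗[ℝ] V, ∀ x ∈ Set.extremePoints ℝ K, Φ x = x ⊗ₜ[ℝ] x) ↔
    LinearIndependent ℝ (Subtype.val : Set.extremePoints ℝ K → V) :=
  no_broadcasting_general K e he
end
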